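/- Let Y be a principal branch of the infinite ternary tree with root r and origin o. Fix a rotor configuration on Y with the root rotor pointing to o (direction 3). Let c and d be the escape sequences for the induced rotor configurations on the left and right sub-branches of Y, respectively. Then φ(c, d) is the escape sequence for the full branch Y. -/

import Mathlib

/-!
A principal branch `Y` of the infinite ternary tree.

`Y` is rooted at a neighbor `r` of the origin `o` and includes the edge
`(o, r)`, so `r` has degree 3 in `Y` and `o` has degree 1.  Vertices of `Y`
other than `o` are encoded as lists over `Fin 2` (the root `r` is `[]` and
children are obtained by appending a letter: `0` = left, `1` = right); a chip
position is `Option (List (Fin 2))` with `none` standing for `o`.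

Every vertex other than `o` carries a rotor with three directions indexed by
`ZMod 3`: value `0` (direction 1) points to the left child, value `1`
(direction 2) to the right child, and value `2` (direction 3) to the parent
(for `r`, to `o`).  A rotor-router step increments the rotor at the chip's
location, then moves the chip in the new direction.  Chips are started at `o`
one at a time; a chip immediately steps to `r` and then walks until it
returns to `o` (absorbing) or escapes to infinity, rotors persisting between
chips.
-/

/-- Rotor configurations on the branch `Y`. -/
abbrev YConf := List (Fin 2) → ZMod 3

/-- One rotor-router step on `Y`; the origin `o` (= `none`) is absorbing. -/
def ystep (p : YConf × Option (List (Fin 2))) : YConf × Option (List (Fin 2)) :=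
  match p with
  | (C, none) => (C, none)
  | (C, some w) =>
    let r := C w + 1
    let C' := Function.update C w r
    if h : r.val < 2 then (C', some (w ++ [⟨r.val, h⟩]))
    else (C', if w = [] then none else some w.dropLast)

/-- The chip started at `o` (which immediately steps to the root `r`)
eventually returns to `o`. -/
def ychipReturns (C : YConf) : Prop := ∃ k, (ystep^[k] (C, some [])).2 = none

/-- The rotor configuration left behind by one chip started at `o`: each
rotor takes its eventual value along the trajectory (well-defined whether the
chip returns to `o` or escapes to infinity, since in the latter case it
visits each vertex only finitely often). -/
noncomputable def ynextConf (C : YConf) : YConf := fun v =>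
  haveI := Classical.dec (∃ c : ZMod 3, ∃ K : ℕ, ∀ k, K ≤ k → (ystep^[k] (C, some [])).1 v = c)
  if h : ∃ c : ZMod 3, ∃ K : ℕ, ∀ k, K ≤ k → (ystep^[k] (C, some [])).1 v = c then
    h.choose
  else C v

/-- The rotor configuration seen by the `(j+1)`-st chip. -/
noncomputable def yconfSeq (C0 : YConf) : ℕ → YConf
  | 0 => C0
  | j + 1 => ynextConf (yconfSeq C0 j)

/-- The `(j+1)`-st chip (`j = 0, 1, 2, …`) escapes to infinity. -/
def yescapes (C0 : YConf) (j : ℕ) : Prop := ¬ ychipReturns (yconfSeq C0 j)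

/-- The map `φ`: given binary words `c`, `d` of the same length (presented as
a list of pairs), `φ(c, d)` is the concatenation `b₁ ⋯ b_m` where `b_j = 0`
if `(c_j, d_j) = (0,0)`, `b_j = 10` if `(c_j, d_j) = (1,0)` or `(0,1)`, and
`b_j = 110` if `(c_j, d_j) = (1,1)`. -/
def phiWord (l : List (Bool × Bool)) : List Bool :=
  (l.map fun cd =>
    match cd with
    | (false, false) => [false]
    | (true, true) => [true, true, false]
    | _ => [true, false]).flatten

/-!
A chip sent from `r` into the left or right sub-branch walks exactly like a chip of that
sub-branch, `r` playing the role of its origin: it either comes back to `r`, having advanced the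
sub-branch by one chip, or escapes in it. With the root rotor pointing to `o`, successive passes
of chips through `r` are therefore sent into `L`, then into `R`, then back to `o`, and a chip stops
as soon as it escapes. So the chips of `Y` come in rounds, each consuming one chip of `L` and one
of `R` and ending with the root rotor pointing to `o` again; according to the outcomes in `L` and
`R`, the escape pattern of a round is `0`, `10`, `10` or `110`.
-/

open Function

def subConf (a : Fin 2) (C : YConf) : YConf := fun w => C (a :: w)

def graftConf (a : Fin 2) (C D : YConf) : YConf
  | [] => C []
  | b :: w => if b = a then D w else C (b :: w)

section Graft

variable {a b : Fin 2} {C D : YConf} {w : List (Fin 2)} {r : ZMod 3}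

@[simp] lemma graftConf_nil : graftConf a C D [] = C [] := rfl

@[simp] lemma graftConf_cons_self : graftConf a C D (a :: w) = D w := by simp [graftConf]

lemma graftConf_cons_of_ne (h : b ≠ a) : graftConf a C D (b :: w) = C (b :: w) := by
  simp [graftConf, h]

@[simp] lemma graftConf_subConf_self : graftConf a C (subConf a C) = C := by
  funext v
  rcases v with _ | ⟨b, w⟩
  · rfl
  · by_cases hb : b = a
    · subst hb; simp [subConf]
    · exact graftConf_cons_of_ne hb

@[simp] lemma subConf_graftConf_self : subConf a (graftConf a C D) = D := by
  funext w; simp [subConf]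

lemma subConf_graftConf_of_ne (h : b ≠ a) : subConf b (graftConf a C D) = subConf b C := by
  funext w; exact graftConf_cons_of_ne h

@[simp] lemma subConf_update_nil : subConf a (update C [] r) = subConf a C := by
  funext w; exact update_of_ne (List.cons_ne_nil _ _) _ _

lemma update_graftConf_cons :
    update (graftConf a C D) (a :: w) r = graftConf a C (update D w r) := by
  funext v
  rcases v with _ | ⟨b, v⟩
  · simp
  · by_cases hb : b = a
    · subst hb
      by_cases hv : v = w
      · subst hv; simp
      · simp [update_of_ne (show b :: v ≠ b :: w by simpa using hv), update_of_ne hv]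
    · simp [update_of_ne (show b :: v ≠ a :: w by simp [hb]), graftConf_cons_of_ne hb]

end Graft

section Step

variable {a : Fin 2} {C : YConf} {w : List (Fin 2)}

lemma ystep_some_of_lt (h : (C w + 1).val < 2) :
    ystep (C, some w) = (update C w (C w + 1), some (w ++ [⟨(C w + 1).val, h⟩])) := by
  simp [ystep, h]

lemma ystep_some_of_not_lt (h : ¬ (C w + 1).val < 2) :
    ystep (C, some w) = (update C w (C w + 1), if w = [] then none else some w.dropLast) := by
  simp [ystep, h]

lemma ystep_nil_of_add_one_eq (h : C [] + 1 = (a.val : ZMod 3)) :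
    ystep (C, some []) = (update C [] (a.val : ZMod 3), some [a]) := by
  have hval : ((a.val : ZMod 3)).val = a.val := ZMod.val_cast_of_lt (a.isLt.trans (by norm_num))
  rw [ystep_some_of_lt (by rw [h, hval]; exact a.isLt)]
  simp only [h, List.nil_append, hval]

@[simp] lemma ystep_none (C : YConf) : ystep (C, none) = (C, none) := rfl

lemma iterate_ystep_none (C : YConf) (k : ℕ) : ystep^[k] (C, none) = (C, none) :=
  iterate_fixed (ystep_none C) k

lemma iterate_ystep_snd_eq_none_of_le {p : YConf × Option (List (Fin 2))} {k n : ℕ}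
    (h : (ystep^[k] p).2 = none) (hkn : k ≤ n) : (ystep^[n] p).2 = none := by
  obtain ⟨t, rfl⟩ := Nat.exists_eq_add_of_le hkn
  rw [add_comm, iterate_add_apply, show ystep^[k] p = ((ystep^[k] p).1, none) from Prod.ext rfl h,
    iterate_ystep_none]

lemma iterate_ystep_graftConf {k : ℕ} {D : YConf}
    (h : ystep^[k] (subConf a C, some []) = (D, some w)) :
    ystep^[k] (C, some [a]) = (graftConf a C D, some (a :: w)) := by
  induction k generalizing D w with
  | zero =>
    simp only [iterate_zero_apply, Prod.mk.injEq, Option.some.injEq] at h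
    obtain ⟨rfl, rfl⟩ := h
    simp
  | succ k ih =>
    rw [iterate_succ_apply'] at h ⊢
    obtain ⟨D', w', hk⟩ : ∃ D' w', ystep^[k] (subConf a C, some []) = (D', some w') := by
      rcases hq : ystep^[k] (subConf a C, some []) with ⟨D', _ | w'⟩
      · rw [hq, ystep_none] at h; simp at h
      · exact ⟨D', w', rfl⟩
    rw [ih hk]
    rw [hk] at h
    by_cases hr : (D' w' + 1).val < 2
    · rw [ystep_some_of_lt hr] at h
      simp only [Prod.mk.injEq, Option.some.injEq] at h
      obtain ⟨rfl, rfl⟩ := h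
      rw [ystep_some_of_lt (by simpa using hr)]
      simp [update_graftConf_cons]
    · rw [ystep_some_of_not_lt hr] at h
      obtain ⟨rfl, hw⟩ := Prod.mk.inj h
      have hw' : w' ≠ [] := by rintro rfl; simp at hw
      rw [if_neg hw', Option.some_inj] at hw
      subst hw
      rw [ystep_some_of_not_lt (by simpa using hr)]
      simp [update_graftConf_cons, List.dropLast_cons_of_ne_nil hw']

end Step

section NextConf

variable {C D E : YConf} {v w : List (Fin 2)}

lemma ynextConf_apply_of_forall_ge {c : ZMod 3} {K : ℕ}
    (h : ∀ k ≥ K, (ystep^[k] (C, some [])).1 v = c) : ynextConf C v = c := by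
  have hex : ∃ c : ZMod 3, ∃ K : ℕ, ∀ k, K ≤ k → (ystep^[k] (C, some [])).1 v = c := ⟨c, K, h⟩
  rw [ynextConf, dif_pos hex]
  obtain ⟨K', hK'⟩ := hex.choose_spec
  exact (hK' (max K K') (le_max_right _ _)).symm.trans (h (max K K') (le_max_left _ _))

lemma ynextConf_eq_of_iterate_eq {k : ℕ} (h : ystep^[k] (C, some []) = (E, none)) :
    ynextConf C = E := by
  funext v
  refine ynextConf_apply_of_forall_ge (K := k) fun n hn => ?_
  obtain ⟨t, rfl⟩ := Nat.exists_eq_add_of_le hn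
  rw [add_comm, iterate_add_apply, h, iterate_ystep_none]

/-- The hypothesis `C v = D w` covers the junk case where the rotor at `v` never settles. -/
lemma ynextConf_apply_eq_of_shift {n : ℕ}
    (h : ∀ k, (ystep^[k + n] (C, some [])).1 v = (ystep^[k] (D, some [])).1 w)
    (h0 : C v = D w) : ynextConf C v = ynextConf D w := by
  by_cases hD : ∃ c : ZMod 3, ∃ K : ℕ, ∀ k, K ≤ k → (ystep^[k] (D, some [])).1 w = c
  · obtain ⟨c, K, hK⟩ := hD
    rw [ynextConf_apply_of_forall_ge hK, ynextConf_apply_of_forall_ge (K := K + n) fun k hk => ?_]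
    obtain ⟨t, rfl⟩ := Nat.exists_eq_add_of_le hk
    rw [show K + n + t = (K + t) + n by omega, h]
    exact hK _ (Nat.le_add_right _ _)
  · have hC : ¬ ∃ c : ZMod 3, ∃ K : ℕ, ∀ k, K ≤ k → (ystep^[k] (C, some [])).1 v = c := by
      rintro ⟨c, K, hK⟩
      exact hD ⟨c, K, fun k hk => by rw [← h k]; exact hK _ (by omega)⟩
    rw [ynextConf, dif_neg hC, ynextConf, dif_neg hD, h0]

end NextConf

def ReturnsLeaving (C E : YConf) : Prop := ∃ k, ystep^[k] (C, some []) = (E, none)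

/-- The chip started with configuration `C` is at `r`, about to move, with configuration `C'`. -/
def ReachesRoot (C C' : YConf) : Prop := ∃ k, ystep^[k] (C, some []) = (C', some [])

section Chips

variable {C C' E : YConf}

lemma ReturnsLeaving.ychipReturns (h : ReturnsLeaving C E) : ychipReturns C :=
  let ⟨k, hk⟩ := h; ⟨k, by rw [hk]⟩

lemma ReturnsLeaving.ynextConf_eq (h : ReturnsLeaving C E) : ynextConf C = E :=
  let ⟨_, hk⟩ := h; ynextConf_eq_of_iterate_eq hk

lemma ReachesRoot.refl (C : YConf) : ReachesRoot C C := ⟨0, rfl⟩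

lemma ReachesRoot.returnsLeaving (h : ReachesRoot C C') (h' : ReturnsLeaving C' E) :
    ReturnsLeaving C E := by
  obtain ⟨k, hk⟩ := h
  obtain ⟨n, hn⟩ := h'
  exact ⟨n + k, by rw [iterate_add_apply, hk, hn]⟩

lemma returnsLeaving_of_nil_eq_one (h : C [] = 1) : ReturnsLeaving C (update C [] 2) :=
  ⟨1, by rw [iterate_one, ystep_some_of_not_lt (by rw [h]; decide), h, if_pos rfl]; rfl⟩

lemma exists_reachesRoot_of_ychipReturns (h : ychipReturns C) :
    ∃ D, ReachesRoot C D ∧ ¬ (D [] + 1).val < 2 := by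
  classical
  obtain ⟨t, ht⟩ : ∃ t, Nat.find h = t + 1 :=
    Nat.exists_eq_succ_of_ne_zero fun h0 => by simpa [h0] using Nat.find_spec h
  have hmin : (ystep^[t] (C, some [])).2 ≠ none := Nat.find_min h (by omega)
  have hlast : (ystep (ystep^[t] (C, some []))).2 = none := by
    rw [← iterate_succ_apply' ystep, Nat.succ_eq_add_one, ← ht]; exact Nat.find_spec h
  rcases hq : ystep^[t] (C, some []) with ⟨D, _ | w⟩
  · exact absurd (by rw [hq]) hmin
  rw [hq] at hlast
  by_cases hr : (D w + 1).val < 2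
  · simp [ystep_some_of_lt hr] at hlast
  · rw [ystep_some_of_not_lt hr] at hlast
    obtain rfl : w = [] := by by_contra hw; simp [hw] at hlast
    exact ⟨D, ⟨t, hq⟩, hr⟩

end Chips

/-- The configuration after a chip at `r` has been sent into the sub-branch at `a` and that
sub-branch has processed one chip. -/
noncomputable def excursionConf (a : Fin 2) (C : YConf) : YConf :=
  graftConf a (update C [] (a.val : ZMod 3)) (ynextConf (subConf a C))

section Excursion

variable {a b : Fin 2} {C C' : YConf}

@[simp] lemma excursionConf_nil : excursionConf a C [] = (a.val : ZMod 3) := by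
  simp [excursionConf]

@[simp] lemma subConf_excursionConf_self :
    subConf a (excursionConf a C) = ynextConf (subConf a C) := by
  simp [excursionConf]

lemma subConf_excursionConf_of_ne (h : b ≠ a) : subConf b (excursionConf a C) = subConf b C := by
  rw [excursionConf, subConf_graftConf_of_ne h, subConf_update_nil]

lemma reachesRoot_excursionConf (ha : C [] + 1 = (a.val : ZMod 3))
    (hret : ychipReturns (subConf a C)) : ReachesRoot C (excursionConf a C) := by
  obtain ⟨D, ⟨t, ht⟩, hr⟩ := exists_reachesRoot_of_ychipReturns hret
  have hnext : ynextConf (subConf a C) = update D [] (D [] + 1) :=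
    ynextConf_eq_of_iterate_eq (k := t + 1) <| by
      rw [iterate_succ_apply', ht, ystep_some_of_not_lt hr, if_pos rfl]
  refine ⟨t + 2, ?_⟩
  rw [iterate_succ_apply', iterate_succ_apply, ystep_nil_of_add_one_eq ha,
    iterate_ystep_graftConf (by rwa [subConf_update_nil]),
    ystep_some_of_not_lt (by simpa using hr)]
  simp [excursionConf, hnext, update_graftConf_cons]

lemma iterate_ystep_of_not_ychipReturns_subConf (ha : C [] + 1 = (a.val : ZMod 3))
    (hesc : ¬ ychipReturns (subConf a C)) (k : ℕ) :
    ∃ w, ystep^[k + 1] (C, some []) =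
      (graftConf a (update C [] (a.val : ZMod 3)) (ystep^[k] (subConf a C, some [])).1,
        some (a :: w)) := by
  rcases hq : ystep^[k] (subConf a C, some []) with ⟨D, _ | w⟩
  · exact absurd ⟨k, by rw [hq]⟩ hesc
  · exact ⟨w, by rw [iterate_succ_apply, ystep_nil_of_add_one_eq ha,
      iterate_ystep_graftConf (by rwa [subConf_update_nil])]⟩

lemma ReachesRoot.escapes (h : ReachesRoot C C') (ha : C' [] + 1 = (a.val : ZMod 3))
    (hsub : subConf a C' = subConf a C) (hesc : ¬ ychipReturns (subConf a C')) :
    ¬ ychipReturns C ∧ ynextConf C = excursionConf a C' := by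
  obtain ⟨k0, hk0⟩ := h
  have htraj : ∀ k, ∃ w, ystep^[k + 1 + k0] (C, some []) =
      (graftConf a (update C' [] (a.val : ZMod 3)) (ystep^[k] (subConf a C', some [])).1,
        some (a :: w)) := fun k => by
    rw [iterate_add_apply, hk0]
    exact iterate_ystep_of_not_ychipReturns_subConf ha hesc k
  have hlate : ∀ n ≥ 1 + k0, ∃ k, n = k + 1 + k0 := fun n hn => ⟨n - 1 - k0, by omega⟩
  refine ⟨fun ⟨t, ht⟩ => ?_, funext fun v => ?_⟩
  · obtain ⟨w, hw⟩ := htraj t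
    have := iterate_ystep_snd_eq_none_of_le ht (show t ≤ t + 1 + k0 by omega)
    simp [hw] at this
  rcases v with _ | ⟨b, w⟩
  · refine ynextConf_apply_of_forall_ge (K := 1 + k0) fun n hn => ?_
    obtain ⟨k, rfl⟩ := hlate n hn
    obtain ⟨w, hw⟩ := htraj k
    simp [hw]
  by_cases hb : b = a
  · subst hb
    rw [excursionConf, graftConf_cons_self]
    refine ynextConf_apply_eq_of_shift (n := 1 + k0) (fun k => ?_) (congrFun hsub w).symm
    obtain ⟨w', hw'⟩ := htraj k
    rw [← add_assoc, hw']
    exact graftConf_cons_self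
  · rw [excursionConf, graftConf_cons_of_ne hb, update_of_ne (List.cons_ne_nil _ _)]
    refine ynextConf_apply_of_forall_ge (K := 1 + k0) fun n hn => ?_
    obtain ⟨k, rfl⟩ := hlate n hn
    obtain ⟨w', hw'⟩ := htraj k
    rw [hw']
    exact (graftConf_cons_of_ne hb).trans (update_of_ne (List.cons_ne_nil _ _) _ _)

end Excursion

/-- The configuration after one round: excursions into both sub-branches, then a return to `o`. -/
noncomputable def roundConf (C : YConf) : YConf :=
  update (excursionConf 1 (excursionConf 0 C)) [] 2

section Round

variable {C : YConf}

@[simp] lemma roundConf_nil : roundConf C [] = 2 := update_self _ _ _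

lemma subConf_roundConf_zero : subConf 0 (roundConf C) = ynextConf (subConf 0 C) := by
  rw [roundConf, subConf_update_nil, subConf_excursionConf_of_ne (by decide),
    subConf_excursionConf_self]

lemma subConf_roundConf_one : subConf 1 (roundConf C) = ynextConf (subConf 1 C) := by
  rw [roundConf, subConf_update_nil, subConf_excursionConf_self,
    subConf_excursionConf_of_ne (by decide)]

lemma returnsLeaving_update_excursionConf_one (hC : C [] = 0)
    (hR : ychipReturns (subConf 1 C)) : ReturnsLeaving C (update (excursionConf 1 C) [] 2) :=
  (reachesRoot_excursionConf (by simp [hC]) hR).returnsLeaving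
    (returnsLeaving_of_nil_eq_one (by simp))

lemma returnsLeaving_roundConf (hC : C [] = 2) (hL : ychipReturns (subConf 0 C))
    (hR : ychipReturns (subConf 1 C)) : ReturnsLeaving C (roundConf C) :=
  (reachesRoot_excursionConf (by rw [hC]; decide) hL).returnsLeaving
    (returnsLeaving_update_excursionConf_one (by simp)
      (by rwa [subConf_excursionConf_of_ne (by decide)]))

end Round

def IsEscapeSeq (C : YConf) (w : List Bool) : Prop :=
  ∀ j (hj : j < w.length), w[j] = true ↔ yescapes C j

section EscapeSeq

variable {C E : YConf} {b : Bool} {w : List Bool}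

lemma yconfSeq_succ' (C : YConf) (j : ℕ) : yconfSeq C (j + 1) = yconfSeq (ynextConf C) j := by
  induction j with
  | zero => rfl
  | succ j ih => exact congrArg ynextConf ih

lemma isEscapeSeq_nil (C : YConf) : IsEscapeSeq C [] := fun _ hj => absurd hj (Nat.not_lt_zero _)

lemma isEscapeSeq_cons :
    IsEscapeSeq C (b :: w) ↔ (b = true ↔ ¬ ychipReturns C) ∧ IsEscapeSeq (ynextConf C) w := by
  refine ⟨fun h => ⟨h 0 (Nat.succ_pos _), fun j hj => ?_⟩, fun ⟨h0, h⟩ j hj => ?_⟩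
  · rw [yescapes, ← yconfSeq_succ']; exact h (j + 1) (Nat.succ_lt_succ hj)
  · rcases j with _ | j
    · exact h0
    · rw [yescapes, yconfSeq_succ']; exact h j (Nat.lt_of_succ_lt_succ hj)

lemma ReturnsLeaving.isEscapeSeq_false_cons (h : ReturnsLeaving C E) (hw : IsEscapeSeq E w) :
    IsEscapeSeq C (false :: w) :=
  isEscapeSeq_cons.2 ⟨by simpa using h.ychipReturns, h.ynextConf_eq ▸ hw⟩

lemma isEscapeSeq_true_cons (h : ¬ ychipReturns C) (hE : ynextConf C = E)
    (hw : IsEscapeSeq E w) : IsEscapeSeq C (true :: w) :=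
  isEscapeSeq_cons.2 ⟨by simpa using h, hE ▸ hw⟩

end EscapeSeq

lemma isEscapeSeq_phiWord_cons {C : YConf} {c₀ d₀ : Bool} {l : List (Bool × Bool)}
    (hC : C [] = 2) (hc : c₀ = true ↔ ¬ ychipReturns (subConf 0 C))
    (hd : d₀ = true ↔ ¬ ychipReturns (subConf 1 C))
    (hl : IsEscapeSeq (roundConf C) (phiWord l)) :
    IsEscapeSeq C (phiWord ((c₀, d₀) :: l)) := by
  have ha₀ : C [] + 1 = ((0 : Fin 2).val : ZMod 3) := by rw [hC]; decide
  have ha₁ : excursionConf 0 C [] + 1 = ((1 : Fin 2).val : ZMod 3) := by simp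
  have hsub₁ : subConf 1 (excursionConf 0 C) = subConf 1 C :=
    subConf_excursionConf_of_ne (by decide)
  have hE₁ : ReturnsLeaving (excursionConf 1 (excursionConf 0 C)) (roundConf C) :=
    returnsLeaving_of_nil_eq_one (by simp)
  cases c₀ <;> cases d₀ <;> simp only [Bool.false_eq_true, false_iff, not_not, true_iff] at hc hd
  · exact (returnsLeaving_roundConf hC hc hd).isEscapeSeq_false_cons hl
  · obtain ⟨hesc, hnext⟩ := (reachesRoot_excursionConf ha₀ hc).escapes ha₁ hsub₁ (hsub₁ ▸ hd)
    exact isEscapeSeq_true_cons hesc hnext (hE₁.isEscapeSeq_false_cons hl)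
  · obtain ⟨hesc, hnext⟩ := (ReachesRoot.refl C).escapes ha₀ rfl hc
    exact isEscapeSeq_true_cons hesc hnext <| (returnsLeaving_update_excursionConf_one
      (by simp) (hsub₁ ▸ hd)).isEscapeSeq_false_cons hl
  · obtain ⟨hesc, hnext⟩ := (ReachesRoot.refl C).escapes ha₀ rfl hc
    obtain ⟨hesc', hnext'⟩ := (ReachesRoot.refl _).escapes ha₁ rfl (hsub₁ ▸ hd)
    exact isEscapeSeq_true_cons hesc hnext <| isEscapeSeq_true_cons hesc' hnext' <|
      hE₁.isEscapeSeq_false_cons hl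

lemma isEscapeSeq_phiWord {l : List (Bool × Bool)} {C : YConf} (hC : C [] = 2)
    (h₀ : IsEscapeSeq (subConf 0 C) (l.map Prod.fst))
    (h₁ : IsEscapeSeq (subConf 1 C) (l.map Prod.snd)) : IsEscapeSeq C (phiWord l) := by
  induction l generalizing C with
  | nil => exact isEscapeSeq_nil C
  | cons p l ih =>
    rw [List.map_cons, isEscapeSeq_cons] at h₀ h₁
    refine isEscapeSeq_phiWord_cons hC h₀.1 h₁.1 (ih roundConf_nil ?_ ?_)
    · rw [subConf_roundConf_zero]; exact h₀.2
    · rw [subConf_roundConf_one]; exact h₁.2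

/-- Lemma 4.4: fix a rotor configuration on the branch `Y` whose root rotor
points to `o` (direction 3, encoded by `2 : ZMod 3`).  If `c` and `d` are the
escape sequences (of any common length `m`) for the induced configurations on
the left and right sub-branches of `Y`, then `φ(c, d)` is the escape sequence
for the full branch `Y`. -/
theorem stmt14 (C0 : YConf) (hroot : C0 [] = 2) (m : ℕ) (c d : List Bool)
    (hcm : c.length = m) (hdm : d.length = m)
    (hc : ∀ j : Fin c.length,
      (c.get j = true ↔ yescapes (fun v => C0 (0 :: v)) j.val))
    (hd : ∀ j : Fin d.length,
      (d.get j = true ↔ yescapes (fun v => C0 (1 :: v)) j.val)) :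
    ∀ i : Fin (phiWord (c.zip d)).length,
      ((phiWord (c.zip d)).get i = true ↔ yescapes C0 i.val) := by
  have h₀ : IsEscapeSeq (subConf 0 C0) ((c.zip d).map Prod.fst) := by
    rw [List.map_fst_zip (by omega)]; exact fun j hj => hc ⟨j, hj⟩
  have h₁ : IsEscapeSeq (subConf 1 C0) ((c.zip d).map Prod.snd) := by
    rw [List.map_snd_zip (by omega)]; exact fun j hj => hd ⟨j, hj⟩
  exact fun ⟨i, hi⟩ => isEscapeSeq_phiWord hroot h₀ h₁ i hi
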